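/- Let p ∈ (0, 1/2], define f : (0,∞) → ℝ by f(x) = (x/2)·( 1/(p·x + 1 − p) + 1/((1−p)·x + p) ), and let r be the scalar-curvature function of f. Then r has a strict local maximum at the origin: there exists ε > 0 such that r(a) < 6 + 36·f″(1) for all a with 0 < |a| < ε, where lim_{a→0} r(a) = 6 + 36·f″(1). -/

import Mathlib

/-!
At `c = (1-a)/(1+a)` the two denominators of `f` become `(1 ± (1-2p)a)/(1+a)`, so `f`, `f'`, `f''`
at `c` are rational in `a`, and the curvature collapses to
`r(a) = 6 - 72p(1-p) - 2p(1-p) a² H((1-2p)², a²) / ((1-a²)(1-(1-2p)²a²)²)`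
with `H(u,t) = 20(1-ut) + 4u(1-t)(10-9ut)`, which is positive for `u ∈ [0,1]`, `t ∈ [0,1)`.
Since `f''(1) = -2p(1-p)`, the limit at `0` and the strict inequality on `0 < |a| < 1` follow.
-/

open Filter Topology

/-- The scalar-curvature function `r(a)` of the monotone metric on `2×2` density
matrices induced by `f`, at the state with eigenvalues `(1±a)/2`;
here `c = (1−a)/(1+a)`. -/
noncomputable def scurv (f : ℝ → ℝ) (a : ℝ) : ℝ :=
  14*(a - 1) * (deriv f ((1-a)/(1+a)))^2 / ((1+a)^3 * (f ((1-a)/(1+a)))^2)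
    + 2*(a^2 + 7*a - 6) * deriv f ((1-a)/(1+a)) / ((1+a)^2 * a * f ((1-a)/(1+a)))
    + 8*(1 - a) * iteratedDeriv 2 f ((1-a)/(1+a)) / ((1+a)^3 * f ((1-a)/(1+a)))
    + 2*(1+a) * f ((1-a)/(1+a)) / a^2
    + (3*a^3 + 5*a^2 + 8*a - 4) / (2*(1+a)*a^2)

open Set

noncomputable def twoPointFun (p x : ℝ) : ℝ := x/2 * (1/(p*x + 1 - p) + 1/((1-p)*x + p))

noncomputable def twoPointFunDeriv (p x : ℝ) : ℝ :=
  ((1-p)/(p*x + 1 - p)^2 + p/((1-p)*x + p)^2) / 2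

section TwoPointFun

variable {p x a : ℝ} {f : ℝ → ℝ}

lemma twoPointFun_denoms_pos (hp0 : 0 ≤ p) (hp1 : p ≤ 1) (hx : 0 < x) :
    0 < p*x + 1 - p ∧ 0 < (1-p)*x + p := by
  constructor <;> nlinarith [mul_nonneg hp0 hx.le, mul_nonneg (sub_nonneg.2 hp1) hx.le]

lemma hasDerivAt_twoPointFun_denoms (p x : ℝ) :
    HasDerivAt (fun y => p*y + 1 - p) p x ∧ HasDerivAt (fun y => (1-p)*y + p) (1-p) x :=
  ⟨by simpa using (((hasDerivAt_id x).const_mul p).add_const 1).sub_const p,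
    by simpa using ((hasDerivAt_id x).const_mul (1-p)).add_const p⟩

lemma hasDerivAt_twoPointFun (hu : p*x + 1 - p ≠ 0) (hv : (1-p)*x + p ≠ 0) :
    HasDerivAt (twoPointFun p) (twoPointFunDeriv p x) x := by
  obtain ⟨hu', hv'⟩ := hasDerivAt_twoPointFun_denoms p x
  unfold twoPointFunDeriv
  refine (((hasDerivAt_id' x).div_const 2).fun_mul
    (((hasDerivAt_const x 1).fun_div hu' hu).fun_add
      ((hasDerivAt_const x 1).fun_div hv' hv))).congr_deriv ?_
  have hv₂ : x*(1-p) + p ≠ 0 := by rwa [mul_comm]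
  field_simp
  ring

lemma hasDerivAt_twoPointFunDeriv (hu : p*x + 1 - p ≠ 0) (hv : (1-p)*x + p ≠ 0) :
    HasDerivAt (twoPointFunDeriv p)
      (-(p*(1-p)) * (1/(p*x + 1 - p)^3 + 1/((1-p)*x + p)^3)) x := by
  obtain ⟨hu', hv'⟩ := hasDerivAt_twoPointFun_denoms p x
  unfold twoPointFunDeriv
  refine ((((hasDerivAt_const x (1-p)).fun_div (hu'.fun_pow 2) (pow_ne_zero 2 hu)).fun_add
    ((hasDerivAt_const x p).fun_div (hv'.fun_pow 2) (pow_ne_zero 2 hv))).div_const 2).congr_deriv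
    ?_
  have hv₂ : x*(1-p) + p ≠ 0 := by rwa [mul_comm]
  field_simp
  ring

lemma deriv_eq_of_eqOn_twoPointFun (hp0 : 0 ≤ p) (hp1 : p ≤ 1)
    (hf : EqOn f (twoPointFun p) (Ioi 0)) (hx : 0 < x) :
    deriv f x = twoPointFunDeriv p x := by
  obtain ⟨hu, hv⟩ := twoPointFun_denoms_pos hp0 hp1 hx
  rw [hf.deriv isOpen_Ioi hx]
  exact (hasDerivAt_twoPointFun hu.ne' hv.ne').deriv

lemma iteratedDeriv_two_eq_of_eqOn_twoPointFun (hp0 : 0 ≤ p) (hp1 : p ≤ 1)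
    (hf : EqOn f (twoPointFun p) (Ioi 0)) (hx : 0 < x) :
    iteratedDeriv 2 f x = -(p*(1-p)) * (1/(p*x + 1 - p)^3 + 1/((1-p)*x + p)^3) := by
  obtain ⟨hu, hv⟩ := twoPointFun_denoms_pos hp0 hp1 hx
  have hf' : EqOn (deriv f) (twoPointFunDeriv p) (Ioi 0) :=
    fun y hy => deriv_eq_of_eqOn_twoPointFun hp0 hp1 hf hy
  rw [iteratedDeriv_succ, iteratedDeriv_one, hf'.deriv isOpen_Ioi hx]
  exact (hasDerivAt_twoPointFunDeriv hu.ne' hv.ne').deriv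

def curvPoly (u t : ℝ) : ℝ := 20*(1 + 2*u) - 12*u*(5 + 3*u)*t + 36*u^2*t^2

noncomputable def twoPointCurv (p a : ℝ) : ℝ :=
  6 - 72*p*(1-p) - 2*p*(1-p) * a^2 * curvPoly ((1-2*p)^2) (a^2)
    / ((1 - a^2) * (1 - (1-2*p)^2*a^2)^2)

lemma scurv_eq_twoPointCurv (hp0 : 0 ≤ p) (hp1 : p ≤ 1) (hf : EqOn f (twoPointFun p) (Ioi 0))
    (ha0 : a ≠ 0) (ha : |a| < 1) : scurv f a = twoPointCurv p a := by
  obtain ⟨ha₁, ha₂⟩ := abs_lt.mp ha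
  have hsa : |(1-2*p)*a| < 1 := by
    rw [abs_mul]
    have : |1 - 2*p| ≤ 1 := abs_le.mpr ⟨by linarith, by linarith⟩
    nlinarith [abs_nonneg a, abs_nonneg (1-2*p)]
  have hA : 1 + (1-2*p)*a ≠ 0 := by linarith [(abs_lt.mp hsa).1]
  have hB : 1 - (1-2*p)*a ≠ 0 := by linarith [(abs_lt.mp hsa).2]
  have h1 : 1 + a ≠ 0 := by linarith
  have h2 : 1 - a ≠ 0 := by linarith
  have hc : 0 < (1-a)/(1+a) := div_pos (by linarith) (by linarith)
  have hu : p*((1-a)/(1+a)) + 1 - p = (1 + (1-2*p)*a)/(1+a) := by field_simp; ring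
  have hv : (1-p)*((1-a)/(1+a)) + p = (1 - (1-2*p)*a)/(1+a) := by field_simp; ring
  have hw : 1 - (1-2*p)^2*a^2 = (1 + (1-2*p)*a) * (1 - (1-2*p)*a) := by ring
  rw [scurv, hf hc, deriv_eq_of_eqOn_twoPointFun hp0 hp1 hf hc,
    iteratedDeriv_two_eq_of_eqOn_twoPointFun hp0 hp1 hf hc, twoPointFun, twoPointFunDeriv, hu, hv,
    twoPointCurv, curvPoly, hw, show 1 - a^2 = (1 - a) * (1 + a) by ring]
  -- `field_simp` loses track of `1 ± (1-2p)a ≠ 0` once it normalises these factors, so they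
  -- are turned into atoms first.
  generalize hAdef : 1 + (1-2*p)*a = A at *
  generalize hBdef : 1 - (1-2*p)*a = B at *
  field_simp
  subst hAdef hBdef
  ring

lemma curvPoly_pos {u t : ℝ} (hu0 : 0 ≤ u) (hu1 : u ≤ 1) (ht1 : t < 1) :
    0 < curvPoly u t := by
  have hut : u * t < 1 := by rcases le_total 0 t with ht | ht <;> nlinarith
  have key : curvPoly u t = 20 * (1 - u*t) + 4 * (u * (1 - t)) * (10 - 9 * (u*t)) := by
    unfold curvPoly; ring
  rw [key]
  have : 0 ≤ u * (1 - t) := mul_nonneg hu0 (by linarith)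
  nlinarith

lemma twoPointCurv_lt (hp0 : 0 < p) (hp1 : p < 1) (ha0 : a ≠ 0) (ha : |a| < 1) :
    twoPointCurv p a < 6 - 72*p*(1-p) := by
  have ha2 : 0 < a^2 := by positivity
  have ha2' : a^2 < 1 := (sq_lt_one_iff_abs_lt_one a).2 ha
  have hs0 : 0 ≤ (1-2*p)^2 := sq_nonneg _
  have hs1 : (1-2*p)^2 ≤ 1 := by nlinarith
  have hw : 0 < 1 - (1-2*p)^2*a^2 := by nlinarith
  have hH := curvPoly_pos hs0 hs1 ha2'
  have : 0 < 2*p*(1-p) * a^2 * curvPoly ((1-2*p)^2) (a^2)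
      / ((1 - a^2) * (1 - (1-2*p)^2*a^2)^2) := by
    have : 0 < 1 - p := by linarith
    have : 0 < 1 - a^2 := by linarith
    positivity
  unfold twoPointCurv
  linarith

lemma tendsto_twoPointCurv (p : ℝ) :
    Tendsto (twoPointCurv p) (𝓝 0) (𝓝 (6 - 72*p*(1-p))) := by
  have : ContinuousAt (twoPointCurv p) 0 := by
    unfold twoPointCurv curvPoly
    refine continuousAt_const.sub (ContinuousAt.div (by fun_prop) (by fun_prop) (by norm_num))
  simpa [twoPointCurv] using this.tendsto

lemma iteratedDeriv_two_one_of_eqOn_twoPointFun (hp0 : 0 ≤ p) (hp1 : p ≤ 1)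
    (hf : EqOn f (twoPointFun p) (Ioi 0)) : iteratedDeriv 2 f 1 = -(2*p*(1-p)) := by
  rw [iteratedDeriv_two_eq_of_eqOn_twoPointFun hp0 hp1 hf one_pos]
  ring

end TwoPointFun

/-- for `p ∈ (0, 1/2]`, the scalar curvature of the metric coming
from `f(x) = (x/2)(1/(px+1−p) + 1/((1−p)x+p))` has a strict local maximum at the
origin. -/
theorem stmt_14 (p : ℝ) (hp0 : 0 < p) (hp1 : p ≤ 1/2)
    (f : ℝ → ℝ)
    (hf : ∀ x > (0:ℝ), f x = x/2 * (1/(p*x + 1 - p) + 1/((1-p)*x + p))) :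
    Tendsto (scurv f) (𝓝[≠] 0) (𝓝 (6 + 36 * iteratedDeriv 2 f 1)) ∧
    ∃ ε > (0:ℝ), ∀ a : ℝ, 0 < |a| → |a| < ε →
      scurv f a < 6 + 36 * iteratedDeriv 2 f 1 := by
  have hp1' : p < 1 := by linarith
  have hf' : EqOn f (twoPointFun p) (Ioi 0) := fun x hx => hf x hx
  have hlim : 6 + 36 * iteratedDeriv 2 f 1 = 6 - 72*p*(1-p) := by
    rw [iteratedDeriv_two_one_of_eqOn_twoPointFun hp0.le hp1'.le hf']
    ring
  have hcurv : ∀ a, a ≠ 0 → |a| < 1 → scurv f a = twoPointCurv p a := fun a ha0 ha =>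
    scurv_eq_twoPointCurv hp0.le hp1'.le hf' ha0 ha
  rw [hlim]
  refine ⟨?_, 1, one_pos, fun a ha0 ha => ?_⟩
  · refine (tendsto_twoPointCurv p).mono_left nhdsWithin_le_nhds |>.congr' ?_
    filter_upwards [self_mem_nhdsWithin,
      nhdsWithin_le_nhds (Ioo_mem_nhds (neg_lt_zero.2 one_pos) one_pos)] with a ha0 ha
    exact (hcurv a ha0 (abs_lt.2 ha)).symm
  · rw [hcurv a (abs_pos.1 ha0) ha]
    exact twoPointCurv_lt hp0 hp1' (abs_pos.1 ha0) ha
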